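/- arXiv:2308.00642 — 5 statements merged into one kernel-verified Lean document; each statement's English description precedes it below -/
import Mathlib

section
/- Let R be a finite commutative ring, u a unit with u² = 1, k ∈ R with u·k = k, and let C be a cyclic code of length n over R. If C is a (u,k)-reversible complement code (i.e., (a(z))^{RC} ∈ C for all a(z) ∈ C), then C is reversible: a*(z) ∈ C for every a(z) ∈ C. -/
open Polynomial

/-- The element of `R[z]/(z^n - 1)` corresponding to the codeword `a = (a_0, …, a_{n-1})`. -/
noncomputable def word {R : Type*} [CommRing R] (n : ℕ) (a : Fin n → R) :
    Polynomial R ⧸ Ideal.span {(X : Polynomial R) ^ n - 1} :=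
  Ideal.Quotient.mk _ (∑ i : Fin n, C (a i) * X ^ (i : ℕ))

/-- If a cyclic code `C` of length `n` over a finite commutative ring `R`
(with `u` a unit, `u² = 1`, `u·k = k`, and `cb` the `(u,k)`-complement map, `r + u·cb r = k`)
is a `(u,k)`-reversible complement code, i.e. closed under
`a(z) ↦ (a(z))^{RC} = ∑ᵢ cb (a_{n−1−i}) zⁱ`, then `C` is reversible:
the reversal of every codeword is again a codeword. -/
theorem stmt4 (R : Type*) [CommRing R] [Fintype R] (u k : R)
    (hu : IsUnit u) (hu2 : u * u = 1) (hk : u * k = k)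
    (cb : R → R) (hcb : ∀ r : R, r + u * cb r = k) (n : ℕ) (hn : 0 < n)
    (Cc : Ideal (Polynomial R ⧸ Ideal.span {(X : Polynomial R) ^ n - 1}))
    (hRC : ∀ a : Fin n → R, word n a ∈ Cc → word n (fun i => cb (a (Fin.rev i))) ∈ Cc) :
    ∀ a : Fin n → R, word n a ∈ Cc → word n (fun i => a (Fin.rev i)) ∈ Cc := by
  intro a ha
  have h0 : word n (fun _ : Fin n => (0:R)) ∈ Cc := by
    have hz : word n (fun _ : Fin n => (0:R)) = 0 := by
      simp [word]
    rw [hz]; exact Cc.zero_mem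
  have hk0 := hRC _ h0
  have hb := hRC a ha
  have key : word n (fun i => a (Fin.rev i)) =
      Ideal.Quotient.mk _ (C (-u)) *
        (word n (fun i => cb (a (Fin.rev i))) - word n (fun _ : Fin n => cb 0)) := by
    unfold word
    rw [← map_sub, ← map_mul]
    congr 1
    rw [← Finset.sum_sub_distrib, Finset.mul_sum]
    refine Finset.sum_congr rfl fun i _ => ?_
    have h : -u * (cb (a (Fin.rev i)) - cb 0) = a (Fin.rev i) := by
      linear_combination hcb 0 - hcb (a (Fin.rev i))
    show C (a (Fin.rev i)) * X ^ (i : ℕ) = _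
    rw [← h, map_mul, map_sub]
    ring
  rw [key]
  exact Ideal.mul_mem_left _ _ (Cc.sub_mem hb hk0)
end

section
/- Let R be a finite commutative ring, u a unit with u² = 1, k ∈ R with u·k = k, and let C be a cyclic code of length n over R. Then C is a (u,k)-reversible complement code if and only if (i) the (u,k)-reverse complement of the zero codeword, namely u⁻¹k·(z^{n−1} + ⋯ + z + 1), belongs to C, and (ii) C is reversible. -/
open Polynomial

/-- A cyclic code `C` of length `n` over a finite commutative ring `R`
(`u` a unit with `u² = 1`, `u·k = k`, `cb` the `(u,k)`-complement map: `r + u·cb r = k`)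
is a `(u,k)`-reversible complement code iff (i) the `(u,k)`-reverse complement of the
zero codeword, `u⁻¹k·(z^{n−1} + ⋯ + 1)` (i.e. the constant word with all entries `cb 0`),
belongs to `C`, and (ii) `C` is reversible. -/
theorem stmt5 (R : Type*) [CommRing R] [Fintype R] (u k : R)
    (hu : IsUnit u) (hu2 : u * u = 1) (hk : u * k = k)
    (cb : R → R) (hcb : ∀ r : R, r + u * cb r = k) (n : ℕ) (hn : 0 < n)
    (Cc : Ideal (Polynomial R ⧸ Ideal.span {(X : Polynomial R) ^ n - 1})) :
    (∀ a : Fin n → R, word n a ∈ Cc → word n (fun i => cb (a (Fin.rev i))) ∈ Cc) ↔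
      (word n (fun _ => ((hu.unit⁻¹ : Rˣ) : R) * k) ∈ Cc ∧
        ∀ a : Fin n → R, word n a ∈ Cc → word n (fun i => a (Fin.rev i)) ∈ Cc) := by
  set v : R := ((hu.unit⁻¹ : Rˣ) : R) with hv
  have hvu : v * u = 1 := by
    have := hu.unit⁻¹.inv_mul
    simpa [hv, IsUnit.unit_spec] using hu.unit.inv_mul
  have huv : u * v = 1 := by rw [mul_comm]; exact hvu
  have hcb' : ∀ r, cb r = v * k - v * r := by
    intro r
    have h1 : u * cb r = k - r := by have := hcb r; linear_combination this
    calc cb r = (v * u) * cb r := by rw [hvu, one_mul]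
      _ = v * (u * cb r) := by ring
      _ = v * (k - r) := by rw [h1]
      _ = v * k - v * r := by ring
  have key : ∀ a : Fin n → R, word n (fun i => cb (a i)) =
      word n (fun _ => v * k) - Ideal.Quotient.mk _ (C v) * word n a := by
    intro a
    simp only [word, ← map_mul, ← map_sub]
    congr 1
    rw [Finset.mul_sum, ← Finset.sum_sub_distrib]
    refine Finset.sum_congr rfl fun i _ => ?_
    rw [hcb' (a i)]
    simp only [C_sub, C_mul]
    ring
  have hzero : word n (fun _ : Fin n => (0 : R)) = 0 := by
    simp [word]
  constructor
  · intro h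
    have hconst : word n (fun _ => v * k) ∈ Cc := by
      have := h (fun _ => 0) (by rw [hzero]; exact Cc.zero_mem)
      have e : (fun i : Fin n => cb ((fun _ : Fin n => (0:R)) (Fin.rev i)))
          = fun _ : Fin n => v * k := by
        funext i; simp [hcb' 0]
      rwa [e] at this
    refine ⟨hconst, fun a ha => ?_⟩
    have hrc := h a ha
    have hk2 : Ideal.Quotient.mk _ (C v) * word n (fun i => a (Fin.rev i)) =
        word n (fun _ => v * k) - word n (fun i => cb (a (Fin.rev i))) := by
      have := key (fun i => a (Fin.rev i))
      rw [this]; ring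
    have hmem : Ideal.Quotient.mk _ (C v) * word n (fun i => a (Fin.rev i)) ∈ Cc := by
      rw [hk2]; exact Cc.sub_mem hconst hrc
    have : word n (fun i => a (Fin.rev i)) =
        Ideal.Quotient.mk _ (C u) * (Ideal.Quotient.mk _ (C v) *
          word n (fun i => a (Fin.rev i))) := by
      rw [← mul_assoc, ← map_mul, ← C_mul, huv]
      simp
    rw [this]
    exact Cc.mul_mem_left _ hmem
  · rintro ⟨hconst, hrev⟩ a ha
    rw [key (fun i => a (Fin.rev i))]
    exact Cc.sub_mem hconst (Cc.mul_mem_left _ (hrev a ha))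
end

section
/- The cyclic code C = ⟨(z+1)⟩ of length 4 over R = Z₂[v]/(v³) is a (1,1)-reversible complement code: for every codeword a(z) ∈ C, the polynomial Σᵢ (1 + a_{3−i}) zⁱ also belongs to C. -/
open Polynomial

noncomputable section

/-- The finite chain ring `R = Z₂[v]/(v³) = Z₂ + vZ₂ + v²Z₂`, `v³ = 0`. -/
abbrev Rv : Type := Polynomial (ZMod 2) ⧸ Ideal.span {(X : Polynomial (ZMod 2)) ^ 3}

instance : CommRing Rv := Ideal.Quotient.commRing _

/-- The element `v` of `Rv`. -/
def vv : Rv := Ideal.Quotient.mk _ X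

/-- The ambient ring `R[z]/(z⁴ − 1)` of cyclic codes of length 4 over `Rv`. -/
abbrev Q4 : Type := Polynomial Rv ⧸ Ideal.span {(X : Polynomial Rv) ^ 4 - 1}

/-- The element `z` of `Q4`. -/
def zz : Q4 := Ideal.Quotient.mk _ X

/-- The constant `r` viewed in `Q4`. -/
def cst (r : Rv) : Q4 := Ideal.Quotient.mk _ (C r)

/-- The element of `Q4` corresponding to the length-4 codeword `a`. -/
def word4 (a : Fin 4 → Rv) : Q4 := Ideal.Quotient.mk _ (∑ i : Fin 4, C (a i) * X ^ (i : ℕ))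

/-- `I` is a `(1,1)`-reversible complement cyclic code: it contains the
`(1,1)`-reverse complement `∑ᵢ (1 + a_{3−i}) zⁱ` of each codeword `∑ᵢ aᵢ zⁱ`. -/
def IsRC11 (I : Ideal Q4) : Prop :=
  ∀ a : Fin 4 → Rv, word4 a ∈ I → word4 (fun i => 1 + a (Fin.rev i)) ∈ I


/-!
Modulo `z + 1` we have `z ≡ -1`, so a word lies in `⟨z + 1⟩` exactly when its value at `z = -1`,
the alternating sum `∑ aᵢ (-1)ⁱ` of its coefficients, lies there. For even length the reverse
complement negates this alternating sum: the complement adds `∑ (-1)ⁱ = 0`, and reversal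
replaces `(-1)ⁱ` by `(-1)^(n-1-i) = -(-1)ⁱ`.
-/

section

variable {S : Type*} [CommRing S]

theorem Polynomial.mk_mem_span_iff_mk_C_eval_mem (J : Ideal S[X]) (x : S) (f : S[X]) :
    Ideal.Quotient.mk J f ∈ Ideal.span {Ideal.Quotient.mk J X - Ideal.Quotient.mk J (C x)} ↔
      Ideal.Quotient.mk J (C (f.eval x)) ∈
        Ideal.span {Ideal.Quotient.mk J X - Ideal.Quotient.mk J (C x)} := by
  have h : Ideal.Quotient.mk J f - Ideal.Quotient.mk J (C (f.eval x)) ∈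
      Ideal.span {Ideal.Quotient.mk J X - Ideal.Quotient.mk J (C x)} := by
    rw [Ideal.mem_span_singleton, ← map_sub, ← map_sub]
    exact _root_.map_dvd (Ideal.Quotient.mk J) X_sub_C_dvd_sub_C_eval
  exact ⟨fun hf => by simpa using sub_mem hf h, fun hc => by simpa using add_mem h hc⟩

theorem Polynomial.eval_neg_one_sum_C_mul_X_pow {n : ℕ} (a : Fin n → S) :
    (∑ i : Fin n, C (a i) * X ^ (i : ℕ)).eval (-1) = ∑ i : Fin n, a i * (-1) ^ (i : ℕ) := by
  simp [eval_finsetSum]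

theorem neg_one_pow_sub_succ {n i : ℕ} (hn : Even n) (hi : i < n) :
    (-1 : S) ^ (n - (i + 1)) = -(-1) ^ i := by
  rcases Nat.even_or_odd i with hpar | hpar
  · have : Odd (n - (i + 1)) := by
      rw [Nat.odd_sub (by omega)]; simp [hn, hpar, parity_simps]
    rw [hpar.neg_one_pow, this.neg_one_pow]
  · have : Even (n - (i + 1)) := by
      rw [Nat.even_sub (by omega)]; simp [hn, hpar, parity_simps]
    rw [hpar.neg_one_pow, this.neg_one_pow, neg_neg]

theorem sum_one_add_rev_mul_neg_one_pow {n : ℕ} (hn : Even n) (a : Fin n → S) :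
    ∑ i : Fin n, (1 + a i.rev) * (-1) ^ (i : ℕ) = -∑ i : Fin n, a i * (-1) ^ (i : ℕ) := by
  simp only [add_mul, one_mul, Finset.sum_add_distrib]
  rw [Fin.sum_univ_eq_sum_range (fun i => (-1 : S) ^ i), neg_one_geom_sum, if_pos hn, zero_add,
    ← Equiv.sum_comp Fin.revPerm]
  simp only [Fin.revPerm_apply, Fin.rev_rev, Fin.val_rev, neg_one_pow_sub_succ hn (Fin.is_lt _),
    mul_neg, Finset.sum_neg_distrib]

end

/-- The cyclic code `C = ⟨z+1⟩` of length 4 over `Z₂[v]/(v³)` is a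
`(1,1)`-reversible complement code. -/
theorem stmt7 : IsRC11 (Ideal.span {zz + 1}) := by
  intro a ha
  have hz : zz + 1 = Ideal.Quotient.mk _ X - Ideal.Quotient.mk _ (C (-1 : Rv)) := by
    simp [zz]
  rw [hz, word4, mk_mem_span_iff_mk_C_eval_mem, eval_neg_one_sum_C_mul_X_pow] at ha ⊢
  rw [sum_one_add_rev_mul_neg_one_pow (by norm_num : Even 4)]
  simpa only [map_neg] using neg_mem ha
end
end

section
/- Let R be a finite commutative ring, u a unit with u² = 1, k ∈ R with u·k = k, and C a cyclic code of length n over R. If C is reversible and u⁻¹k·(1 + z + ⋯ + z^{n−1}) ∈ C, then C is a (u,k)-reversible complement code. -/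
open Polynomial

/-- Let `C` be a cyclic code of length `n` over a finite commutative ring `R`,
`u` a unit with `u² = 1`, `k` with `u·k = k`, and `cb` the `(u,k)`-complement map
(`r + u·cb r = k`).  If `C` is reversible and the constant word
`u⁻¹k·(1 + z + ⋯ + z^{n−1})` lies in `C`, then `C` is a `(u,k)`-reversible complement
code: it is closed under `a(z) ↦ ∑ᵢ cb (a_{n−1−i}) zⁱ`. -/
theorem stmt15 (R : Type*) [CommRing R] [Fintype R] (u k : R)
    (hu : IsUnit u) (hu2 : u * u = 1) (hk : u * k = k)
    (cb : R → R) (hcb : ∀ r : R, r + u * cb r = k) (n : ℕ) (hn : 0 < n)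
    (Cc : Ideal (Polynomial R ⧸ Ideal.span {(X : Polynomial R) ^ n - 1}))
    (hrev : ∀ a : Fin n → R, word n a ∈ Cc → word n (fun i => a (Fin.rev i)) ∈ Cc)
    (hconst : word n (fun _ => ((hu.unit⁻¹ : Rˣ) : R) * k) ∈ Cc) :
    ∀ a : Fin n → R, word n a ∈ Cc → word n (fun i => cb (a (Fin.rev i))) ∈ Cc := by
  intro a ha
  have hcb' : ∀ r : R, cb r = k - u * r := fun r => by
    linear_combination u * (hcb r) - cb r * hu2 + hk
  have hk' : ((hu.unit⁻¹ : Rˣ) : R) * k = k := by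
    have h1 : ((hu.unit⁻¹ : Rˣ) : R) * u = 1 := hu.val_inv_mul
    calc ((hu.unit⁻¹ : Rˣ) : R) * k = ((hu.unit⁻¹ : Rˣ) : R) * (u * k) := by rw [hk]
      _ = k := by rw [← mul_assoc, h1, one_mul]
  have key : word n (fun i => cb (a (Fin.rev i))) =
      word n (fun _ => ((hu.unit⁻¹ : Rˣ) : R) * k) -
        (Ideal.Quotient.mk _ (C u)) * word n (fun i => a (Fin.rev i)) := by
    simp only [word, hcb', hk']
    rw [← map_mul, ← map_sub]
    congr 1
    rw [Finset.mul_sum, ← Finset.sum_sub_distrib]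
    refine Finset.sum_congr rfl fun i _ => ?_
    rw [map_sub, sub_mul, map_mul, mul_assoc]
  rw [key]
  exact Ideal.sub_mem _ hconst (Ideal.mul_mem_left _ _ (hrev a ha))
end

section
/- Let R be a finite commutative ring, u a unit with u² = 1, k ∈ R with u·k = k, and let C be a linear code of length n over R that is a (u,k)-reversible complement code. Then the constant word (u⁻¹k, u⁻¹k, …, u⁻¹k) belongs to C, and for every codeword c ∈ C its reversal also belongs to C. -/
/-- Let `C ⊆ Rⁿ` be a linear code over a finite commutative ring `R`
(`u` a unit with `u² = 1`, `u·k = k`, `cb` the `(u,k)`-complement map: `r + u·cb r = k`)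
which is a `(u,k)`-reversible complement code, i.e. closed under
`(a₀,…,a_{n−1}) ↦ (cb a_{n−1}, …, cb a₀)`.  Then the constant word
`(u⁻¹k, …, u⁻¹k)` belongs to `C`, and the reversal of every codeword belongs to `C`. -/
theorem stmt19 (R : Type*) [CommRing R] [Fintype R] (u k : R)
    (hu : IsUnit u) (hu2 : u * u = 1) (hk : u * k = k)
    (cb : R → R) (hcb : ∀ r : R, r + u * cb r = k) (n : ℕ)
    (C : Submodule R (Fin n → R))
    (hRC : ∀ a ∈ C, (fun i => cb (a (Fin.rev i))) ∈ C) :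
    ((fun _ => ((hu.unit⁻¹ : Rˣ) : R) * k) : Fin n → R) ∈ C ∧
      ∀ a ∈ C, (fun i => a (Fin.rev i)) ∈ C := by
  -- the inverse of u is u itself
  have hv : ((hu.unit⁻¹ : Rˣ) : R) = u := by
    have h1 : ((hu.unit⁻¹ : Rˣ) : R) * u = 1 := hu.val_inv_mul
    calc ((hu.unit⁻¹ : Rˣ) : R) = ((hu.unit⁻¹ : Rˣ) : R) * (u * u) := by rw [hu2, mul_one]
      _ = (((hu.unit⁻¹ : Rˣ) : R) * u) * u := by ring
      _ = u := by rw [h1, one_mul]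
  have hcb0 : cb 0 = k := by
    have := hcb 0
    have h2 : u * (u * cb 0) = u * k := by rw [zero_add] at this; rw [this]
    rwa [← mul_assoc, hu2, one_mul, hk] at h2
  have hconst : ((fun _ => ((hu.unit⁻¹ : Rˣ) : R) * k) : Fin n → R) ∈ C := by
    have h0 := hRC 0 C.zero_mem
    have : ((fun _ => ((hu.unit⁻¹ : Rˣ) : R) * k) : Fin n → R)
        = (fun i => cb ((0 : Fin n → R) (Fin.rev i))) := by
      funext i; simp [hcb0, hv, hk]
    rwa [this]
  refine ⟨hconst, fun a ha => ?_⟩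
  have hmem : u • (((fun _ => ((hu.unit⁻¹ : Rˣ) : R) * k) : Fin n → R)
      - (fun i => cb (a (Fin.rev i)))) ∈ C :=
    C.smul_mem u (C.sub_mem hconst (hRC a ha))
  have : (fun i => a (Fin.rev i))
      = u • (((fun _ => ((hu.unit⁻¹ : Rˣ) : R) * k) : Fin n → R)
      - (fun i => cb (a (Fin.rev i)))) := by
    funext i
    have h := hcb (a (Fin.rev i))
    simp only [Pi.smul_apply, Pi.sub_apply, smul_eq_mul, hv]
    linear_combination h - k * hu2
  rwa [this]
end
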